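/- Let G and G' be connected simple graphs of orders n and n', respectively. Then the Cartesian (box) product G □ G' satisfies ξ(G □ G') ≤ n·ξ(G') + n'·ξ(G) + (n−1)(n'−1). -/

import Mathlib

open Finset

namespace Forwarding

variable {V : Type*} [Fintype V] [DecidableEq V]

/-- A routing of a graph `G`: for every ordered pair of vertices, a fixed path.
(For `x = y` the path condition forces the trivial walk, so only the
`n(n-1)` paths between distinct vertices matter.) -/
structure Routing (G : SimpleGraph V) where
  walk : ∀ x y : V, G.Walk x y
  isPath : ∀ x y : V, (walk x y).IsPath

/-- A routing is minimal if every specified path is a shortest path. -/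
def Routing.IsMinimal {G : SimpleGraph V} (R : Routing G) : Prop :=
  ∀ x y : V, (R.walk x y).length = G.dist x y

/-- The load of a vertex `x`: the number of paths of the routing passing
through `x` as an internal vertex. -/
def vertexLoad {G : SimpleGraph V} (R : Routing G) (x : V) : ℕ :=
  (univ.filter fun p : V × V =>
    p.1 ≠ p.2 ∧ x ∈ (R.walk p.1 p.2).support ∧ x ≠ p.1 ∧ x ≠ p.2).card

/-- The load of an edge `e`: the number of paths of the routing traversing `e`. -/
def edgeLoad {G : SimpleGraph V} (R : Routing G) (e : Sym2 V) : ℕ :=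
  (univ.filter fun p : V × V => p.1 ≠ p.2 ∧ e ∈ (R.walk p.1 p.2).edges).card

/-- `ξ(G,R)`: the maximum vertex load of the routing `R`. -/
def routingVertexIndex {G : SimpleGraph V} (R : Routing G) : ℕ :=
  univ.sup (vertexLoad R)

/-- `π(G,R)`: the maximum edge load of the routing `R`. (Edges not in `G`
carry load `0`, so taking the `sup` over all of `Sym2 V` is equivalent.) -/
def routingEdgeIndex {G : SimpleGraph V} (R : Routing G) : ℕ :=
  univ.sup (edgeLoad R)

/-- The vertex-forwarding index `ξ(G)`. -/
noncomputable def xi (G : SimpleGraph V) : ℕ :=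
  sInf { k | ∃ R : Routing G, routingVertexIndex R = k }

/-- The vertex-forwarding index over minimal routings, `ξ_m(G)`. -/
noncomputable def xiMin (G : SimpleGraph V) : ℕ :=
  sInf { k | ∃ R : Routing G, R.IsMinimal ∧ routingVertexIndex R = k }

/-- The edge-forwarding index `π(G)`. -/
noncomputable def piIdx (G : SimpleGraph V) : ℕ :=
  sInf { k | ∃ R : Routing G, routingEdgeIndex R = k }

/-- The edge-forwarding index over minimal routings, `π_m(G)`. -/
noncomputable def piMinIdx (G : SimpleGraph V) : ℕ :=
  sInf { k | ∃ R : Routing G, R.IsMinimal ∧ routingEdgeIndex R = k }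

end Forwarding


/-!
Route the product by a fixed pair of optimal routings `R` of `G` and `R'` of `G'`: from `(u, u')`
to `(v, v')`, first follow `R u v` inside the copy `G × {u'}`, then `R' u' v'` inside `{v} × G'`.
A vertex `(a, a')` is internal to such a route in one of three ways: internal to the
`G'`-leg (`v = a` and `a'` internal to `R' u' v'`: at most `n · ξ(G')` pairs), internal to the
`G`-leg (`u' = a'` and `a` internal to `R u v`: at most `n' · ξ(G)` pairs), or at the corner
(`v = a`, `u' = a'`, `u ≠ a`, `v' ≠ a'`: `(n - 1)(n' - 1)` pairs).
-/

open SimpleGraph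

namespace SimpleGraph.Walk

variable {V : Type*} {G : SimpleGraph V}

theorem IsPath.append {u v w : V} {p : G.Walk u v} {q : G.Walk v w} (hp : p.IsPath)
    (hq : q.IsPath) (h : ∀ x ∈ p.support, x ∈ q.support → x = v) : (p.append q).IsPath := by
  rw [isPath_def, support_append]
  refine hp.support_nodup.append hq.support_nodup.tail fun x hxp hxq => ?_
  have hv : v ∉ q.support.tail :=
    (List.nodup_cons.mp (q.cons_tail_support ▸ hq.support_nodup)).1
  exact hv (h x hxp (List.mem_of_mem_tail hxq) ▸ hxq)

variable {V' : Type*} {G' : SimpleGraph V'}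

theorem mem_support_boxProdLeft {a₁ a₂ : V} (b : V') (w : G.Walk a₁ a₂) (z : V × V') :
    z ∈ (w.boxProdLeft G' b).support ↔ z.1 ∈ w.support ∧ z.2 = b := by
  change z ∈ (w.map (G.boxProdLeft G' b).toHom).support ↔ _
  obtain ⟨a, b'⟩ := z
  simp [support_map, boxProdLeft, eq_comm, and_comm]

theorem mem_support_boxProdRight {b₁ b₂ : V'} (a : V) (w : G'.Walk b₁ b₂) (z : V × V') :
    z ∈ (w.boxProdRight G a).support ↔ z.1 = a ∧ z.2 ∈ w.support := by
  change z ∈ (w.map (G.boxProdRight G' a).toHom).support ↔ _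
  obtain ⟨a', b⟩ := z
  simp [support_map, boxProdRight, eq_comm, and_comm]

end SimpleGraph.Walk

namespace Forwarding

variable {V : Type*} {G : SimpleGraph V}

namespace Routing

theorem support_walk_self (R : Routing G) (x : V) : (R.walk x x).support = [x] :=
  Walk.nil_iff_support_eq.mp (Walk.isPath_iff_nil.mp (R.isPath x x))

variable [DecidableEq V]

noncomputable def ofPreconnected (hG : G.Preconnected) : Routing G where
  walk x y := (hG x y).some.bypass
  isPath x y := (hG x y).some.bypass_isPath

variable [Fintype V]

def transit (R : Routing G) (x : V) : Finset (V × V) :=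
  univ.filter fun p => x ∈ (R.walk p.1 p.2).support ∧ x ≠ p.1 ∧ x ≠ p.2

end Routing

variable [Fintype V] [DecidableEq V]

theorem vertexLoad_eq_card_transit (R : Routing G) (x : V) :
    vertexLoad R x = (R.transit x).card := by
  refine congrArg card (filter_congr fun ⟨u, v⟩ _ => and_iff_right_of_imp ?_)
  rintro ⟨hx, hxu, -⟩ (rfl : u = v)
  simp [Routing.support_walk_self] at hx
  exact hxu hx

theorem vertexLoad_le_routingVertexIndex (R : Routing G) (x : V) :
    vertexLoad R x ≤ routingVertexIndex R :=
  le_sup (mem_univ x)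

theorem xi_le_routingVertexIndex (R : Routing G) : xi G ≤ routingVertexIndex R :=
  Nat.sInf_le ⟨R, rfl⟩

theorem exists_routingVertexIndex_eq_xi (hG : G.Preconnected) :
    ∃ R : Routing G, routingVertexIndex R = xi G :=
  Nat.sInf_mem (s := {k | ∃ R : Routing G, routingVertexIndex R = k})
    ⟨_, Routing.ofPreconnected hG, rfl⟩

variable {V' : Type*} [Fintype V'] [DecidableEq V'] {G' : SimpleGraph V'}

def Routing.boxProd (R : Routing G) (R' : Routing G') : Routing (G □ G') where
  walk x y := ((R.walk x.1 y.1).boxProdLeft G' x.2).append ((R'.walk x.2 y.2).boxProdRight G y.1)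
  isPath x y :=
    .append ((R.isPath _ _).map (boxProdLeft G G' x.2).injective)
      ((R'.isPath _ _).map (boxProdRight G G' y.1).injective) fun z hz hz' =>
        Prod.ext ((Walk.mem_support_boxProdRight _ _ z).mp hz').1
          ((Walk.mem_support_boxProdLeft _ _ z).mp hz).2

theorem transit_boxProd_subset (R : Routing G) (R' : Routing G') (x : V × V') :
    (R.boxProd R').transit x ⊆
      (univ ×ˢ R'.transit x.2).image (fun q : V × V' × V' => ((q.1, q.2.1), (x.1, q.2.2))) ∪
      (univ ×ˢ R.transit x.1).image (fun q : V' × V × V => ((q.2.1, x.2), (q.2.2, q.1))) ∪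
      ((univ.erase x.1) ×ˢ (univ.erase x.2)).image (fun q => ((q.1, x.2), (x.1, q.2))) := by
  rintro ⟨⟨u, u'⟩, v, v'⟩ hp
  obtain ⟨a, a'⟩ := x
  simp only [Routing.transit, Routing.boxProd, mem_filter, mem_univ, true_and,
    Walk.mem_support_append_iff, Walk.mem_support_boxProdLeft, Walk.mem_support_boxProdRight] at hp
  obtain ⟨hx | hx, hxu, hxv⟩ := hp
  · obtain ⟨ha, rfl⟩ := hx
    have hau : a ≠ u := fun h => hxu (by rw [h])
    by_cases hav : a = v
    · subst hav
      have ha'v' : a' ≠ v' := fun h => hxv (by rw [h])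
      refine mem_union_right _ (mem_image_of_mem _ (a := (u, v')) ?_)
      simp [hau.symm, ha'v'.symm]
    · refine mem_union_left _ (mem_union_right _ (mem_image_of_mem _ (a := (v', u, v)) ?_))
      simp [Routing.transit, ha, hau, hav]
  · obtain ⟨rfl, ha'⟩ := hx
    have ha'v' : a' ≠ v' := fun h => hxv (by rw [h])
    by_cases ha'u' : a' = u'
    · subst ha'u'
      have hau : a ≠ u := fun h => hxu (by rw [h])
      refine mem_union_right _ (mem_image_of_mem _ (a := (u, v')) ?_)
      simp [hau.symm, ha'v'.symm]
    · refine mem_union_left _ (mem_union_left _ (mem_image_of_mem _ (a := (u, u', v')) ?_))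
      simp [Routing.transit, ha', ha'u', ha'v']

theorem vertexLoad_boxProd_le (R : Routing G) (R' : Routing G') (x : V × V') :
    vertexLoad (R.boxProd R') x ≤
      Fintype.card V * vertexLoad R' x.2 + Fintype.card V' * vertexLoad R x.1 +
        (Fintype.card V - 1) * (Fintype.card V' - 1) := by
  simp only [vertexLoad_eq_card_transit]
  refine (card_le_card (transit_boxProd_subset R R' x)).trans <| (card_union_le _ _).trans <|
    add_le_add ((card_union_le _ _).trans (add_le_add ?_ ?_)) ?_ <;>
  exact card_image_le.trans (by simp [card_product])

end Forwarding

/-- For connected graphs `G`, `G'` of orders `n`, `n'`,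
`ξ(G □ G') ≤ n·ξ(G') + n'·ξ(G) + (n-1)(n'-1)`. -/
theorem xi_boxProd_upper_bound {V V' : Type*} [Fintype V] [DecidableEq V]
    [Fintype V'] [DecidableEq V'] (G : SimpleGraph V) (G' : SimpleGraph V')
    (hG : G.Connected) (hG' : G'.Connected) :
    Forwarding.xi (G.boxProd G') ≤
      Fintype.card V * Forwarding.xi G' + Fintype.card V' * Forwarding.xi G +
        (Fintype.card V - 1) * (Fintype.card V' - 1) := by
  obtain ⟨R, hR⟩ := Forwarding.exists_routingVertexIndex_eq_xi hG.preconnected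
  obtain ⟨R', hR'⟩ := Forwarding.exists_routingVertexIndex_eq_xi hG'.preconnected
  refine (Forwarding.xi_le_routingVertexIndex (R.boxProd R')).trans (Finset.sup_le fun x _ => ?_)
  rw [← hR, ← hR']
  refine (Forwarding.vertexLoad_boxProd_le R R' x).trans ?_
  gcongr <;> exact Forwarding.vertexLoad_le_routingVertexIndex _ _
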